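/- arXiv:2602.17292 — 2 statements merged into one kernel-verified Lean document; each statement's English description precedes it below -/
import Mathlib

section
/- Let K be an H-operator-valued kernel on X. Then: (1) K is positive semidefinite if and only if there exists a reproducing kernel Hilbert space ℛ with kernel K; and (2) the reproducing kernel Hilbert space ℛ is uniquely determined by K, i.e., if ℛ and ℛ′ are both reproducing kernel Hilbert spaces with kernel K, then ℛ = ℛ′ as Hilbert spaces of sections. -/
open scoped InnerProductSpace

noncomputable section

universe u v w r

variable {𝕜 : Type u} [RCLike 𝕜] {X : Type v} {H : X → Type w}
  [∀ x, NormedAddCommGroup (H x)] [∀ x, InnerProductSpace 𝕜 (H x)]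
  [∀ x, CompleteSpace (H x)]

/-- `K` is a Hermitian `H`-operator valued kernel: `K(x,y)* = K(y,x)`. -/
def IsHermitianK (K : ∀ y x : X, H x →L[𝕜] H y) : Prop :=
  ∀ x y : X, ContinuousLinearMap.adjoint (K x y) = K y x

/-- `K` is a positive semidefinite kernel. -/
def IsPSDK (K : ∀ y x : X, H x →L[𝕜] H y) : Prop :=
  IsHermitianK K ∧ ∀ (n : ℕ) (x : Fin n → X) (h : ∀ i, H (x i)),
    0 ≤ RCLike.re (∑ i, ∑ j, ⟪K (x j) (x i) (h i), h j⟫_𝕜)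

/-- A reproducing kernel Hilbert space with kernel `K`: a Hilbert space whose
elements are sections of the bundle (encoded via an injective linear embedding
into `Π x, H x`), containing every section `K_x h` and with the reproducing
property. -/
structure RKHSBundle (𝕜 : Type u) [RCLike 𝕜] {X : Type v} (H : X → Type w)
    [∀ x, NormedAddCommGroup (H x)] [∀ x, InnerProductSpace 𝕜 (H x)]
    (K : ∀ y x : X, H x →L[𝕜] H y) : Type (max u v w (r + 1)) where
  carrier : Type r
  [ng : NormedAddCommGroup carrier]
  [ip : InnerProductSpace 𝕜 carrier]
  [cs : CompleteSpace carrier]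
  emb : carrier →ₗ[𝕜] ∀ x, H x
  emb_inj : Function.Injective emb
  Kx : ∀ x : X, H x → carrier
  emb_Kx : ∀ (x : X) (h : H x) (y : X), emb (Kx x h) y = K y x h
  repro : ∀ (f : carrier) (x : X) (h : H x), ⟪emb f x, h⟫_𝕜 = ⟪f, Kx x h⟫_𝕜

attribute [instance] RKHSBundle.ng RKHSBundle.ip RKHSBundle.cs

set_option linter.unusedSectionVars false
set_option maxHeartbeats 1000000
namespace RKHSAux

open RCLike UniformSpace ComplexConjugate

variable {𝕜 : Type u} [RCLike 𝕜] {X : Type v} {H : X → Type w}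
  [∀ x, NormedAddCommGroup (H x)] [∀ x, InnerProductSpace 𝕜 (H x)]
  [∀ x, CompleteSpace (H x)]

variable (K : ∀ y x : X, H x →L[𝕜] H y)

/-- aux: Hermitian hypothesis (duplicated to avoid forward reference). -/
def Herm : Prop := IsHermitianK K

lemma herm_inner (hH : Herm K) (x y : X) (h : H x) (g : H y) :
    ⟪h, K x y g⟫_𝕜 = ⟪K y x h, g⟫_𝕜 := by
  rw [← hH y x, ContinuousLinearMap.adjoint_inner_right]

/-- the section `y ↦ K y x h`. -/
def secf (x : X) (h : H x) : ∀ y, H y := fun y => K y x h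

def SS : Submodule 𝕜 (∀ y, H y) := Submodule.span 𝕜 {f | ∃ x h, secf K x h = f}

def Car : Type (max v w) := ↥(SS K)

instance : AddCommGroup (Car K) := inferInstanceAs (AddCommGroup ↥(SS K))
instance : Module 𝕜 (Car K) := inferInstanceAs (Module 𝕜 ↥(SS K))

def valC : Car K →ₗ[𝕜] ∀ y, H y := (SS K).subtype

lemma valC_inj : Function.Injective (valC K) := Submodule.injective_subtype (SS K)

def mkC (v : ∀ y, H y) (hv : v ∈ SS K) : Car K := (⟨v, hv⟩ : ↥(SS K))

@[simp] lemma valC_mkC (v : ∀ y, H y) (hv : v ∈ SS K) : valC K (mkC K v hv) = v := rfl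

lemma memC (f : Car K) : valC K f ∈ SS K := (show ↥(SS K) from f).2

lemma mkC_eta (f : Car K) : mkC K (valC K f) (memC K f) = f := rfl

def piL (l : List ((x : X) × H x)) : ∀ y, H y := (l.map fun p => secf K p.1 p.2).sum

lemma piL_apply (l : List ((x : X) × H x)) (y : X) :
    piL K l y = ∑ i : Fin l.length, K y (l[i.1]).1 (l[i.1]).2 := by
  have h1 : piL K l y = (l.map fun p => K y p.1 p.2).sum := by
    have := map_list_sum (Pi.evalAddMonoidHom H y) (l.map fun p => secf K p.1 p.2)
    simpa [piL, List.map_map, Function.comp_def, secf] using this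
  rw [h1]
  exact (Fin.sum_univ_fun_getElem l fun p => K y p.1 p.2).symm

def BL (_K : ∀ y x : X, H x →L[𝕜] H y) (l : List ((x : X) × H x)) (g : ∀ y, H y) : 𝕜 :=
  (l.map fun p => (⟪p.2, g p.1⟫_𝕜 : 𝕜)).sum

lemma BL_eq (l : List ((x : X) × H x)) (g : ∀ y, H y) :
    BL K l g = ∑ i : Fin l.length, ⟪(l[i.1]).2, g (l[i.1]).1⟫_𝕜 :=
  (Fin.sum_univ_fun_getElem l fun p => ⟪p.2, g p.1⟫_𝕜).symm

lemma BL_add (l : List ((x : X) × H x)) (a b : ∀ y, H y) :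
    BL K l (a + b) = BL K l a + BL K l b := by
  simp only [BL_eq, Pi.add_apply, inner_add_right, Finset.sum_add_distrib]

lemma BL_smul (l : List ((x : X) × H x)) (c : 𝕜) (a : ∀ y, H y) :
    BL K l (c • a) = c * BL K l a := by
  simp only [BL_eq, Pi.smul_apply, inner_smul_right, Finset.mul_sum]

lemma BL_comm (hH : Herm K) (l l' : List ((x : X) × H x)) :
    BL K l (piL K l') = conj (BL K l' (piL K l)) := by
  rw [BL_eq, BL_eq]
  calc ∑ i : Fin l.length, ⟪(l[i.1]).2, piL K l' (l[i.1]).1⟫_𝕜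
      = ∑ i : Fin l.length, ∑ j : Fin l'.length,
          ⟪K (l'[j.1]).1 (l[i.1]).1 (l[i.1]).2, (l'[j.1]).2⟫_𝕜 := by
        refine Finset.sum_congr rfl fun i _ => ?_
        rw [piL_apply, inner_sum]
        exact Finset.sum_congr rfl fun j _ => herm_inner K hH _ _ _ _
    _ = ∑ j : Fin l'.length, ∑ i : Fin l.length,
          ⟪K (l'[j.1]).1 (l[i.1]).1 (l[i.1]).2, (l'[j.1]).2⟫_𝕜 := Finset.sum_comm
    _ = conj (∑ j : Fin l'.length, ⟪(l'[j.1]).2, piL K l (l'[j.1]).1⟫_𝕜) := by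
        rw [map_sum]
        refine Finset.sum_congr rfl fun j _ => ?_
        rw [inner_conj_symm, piL_apply, sum_inner]

lemma exists_rep (f : Car K) : ∃ l, piL K l = valC K f := by
  have hv := memC K f
  refine Submodule.span_induction (p := fun v _ => ∃ l, piL K l = v) ?_ ?_ ?_ ?_ hv
  · rintro v ⟨x, h, rfl⟩
    exact ⟨[⟨x, h⟩], by simp [piL]⟩
  · exact ⟨[], by simp [piL]⟩
  · rintro a b _ _ ⟨la, rfl⟩ ⟨lb, rfl⟩
    exact ⟨la ++ lb, by simp [piL]⟩
  · rintro c a _ ⟨la, rfl⟩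
    refine ⟨la.map fun p => ⟨p.1, c • p.2⟩, ?_⟩
    have hsec : (fun p : (x : X) × H x => secf K p.1 (c • p.2)) =
        fun p => c • secf K p.1 p.2 := by
      funext p y
      exact (K y p.1).map_smul c p.2
    simp only [piL, List.map_map, Function.comp_def, hsec]
    rw [show (List.map (fun p : (x : X) × H x => c • secf K p.1 p.2) la)
        = List.map (c • ·) (List.map (fun p => secf K p.1 p.2) la) by
          rw [List.map_map]; rfl, ← List.smul_sum]

def repL (f : Car K) : List ((x : X) × H x) := (exists_rep K f).choose

lemma piL_repL (f : Car K) : piL K (repL K f) = valC K f := (exists_rep K f).choose_spec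

def innerC (f g : Car K) : 𝕜 := BL K (repL K f) (valC K g)

lemma innerC_eq (hH : Herm K) (f g : Car K) :
    innerC K f g = conj (BL K (repL K g) (valC K f)) := by
  rw [innerC, ← piL_repL K g, BL_comm K hH, piL_repL]

lemma innerC_conj (hH : Herm K) (f g : Car K) :
    conj (innerC K g f) = innerC K f g := by
  rw [innerC_eq K hH f g]; rfl

lemma innerC_add_left (hH : Herm K) (f g h : Car K) :
    innerC K (f + g) h = innerC K f h + innerC K g h := by
  rw [innerC_eq K hH, innerC_eq K hH f h, innerC_eq K hH g h, map_add (valC K), BL_add, map_add]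

lemma innerC_smul_left (hH : Herm K) (f g : Car K) (c : 𝕜) :
    innerC K (c • f) g = conj c * innerC K f g := by
  rw [innerC_eq K hH, innerC_eq K hH f g, map_smul (valC K), BL_smul, map_mul]

lemma innerC_self_nonneg (hK : IsPSDK K) (f : Car K) : 0 ≤ re (innerC K f f) := by
  set l := repL K f with hl
  have h1 : innerC K f f = ∑ i : Fin l.length, ∑ j : Fin l.length,
      ⟪(l[i.1]).2, K (l[i.1]).1 (l[j.1]).1 (l[j.1]).2⟫_𝕜 := by
    rw [innerC, ← piL_repL K f, BL_eq]
    refine Finset.sum_congr rfl fun i _ => ?_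
    rw [piL_apply, inner_sum]
  have h3 : conj (innerC K f f) = ∑ i : Fin l.length, ∑ j : Fin l.length,
      ⟪K (l[i.1]).1 (l[j.1]).1 (l[j.1]).2, (l[i.1]).2⟫_𝕜 := by
    simp only [h1, map_sum, inner_conj_symm]
  have h4 : conj (innerC K f f) = ∑ i : Fin l.length, ∑ j : Fin l.length,
      ⟪K (l[j.1]).1 (l[i.1]).1 (l[i.1]).2, (l[j.1]).2⟫_𝕜 := h3.trans Finset.sum_comm
  have h2 := hK.2 l.length (fun i => (l[i.1]).1) (fun i => (l[i.1]).2)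
  rw [← RCLike.conj_re, h4]
  exact h2

def KxC (x : X) (h : H x) : Car K := mkC K (secf K x h) (Submodule.subset_span ⟨x, h, rfl⟩)

lemma valC_KxC (x : X) (h : H x) : valC K (KxC K x h) = secf K x h := rfl

lemma innerC_Kx (hH : Herm K) (f : Car K) (x : X) (h : H x) :
    innerC K f (KxC K x h) = ⟪valC K f x, h⟫_𝕜 := by
  rw [innerC, valC_KxC, BL_eq]
  calc ∑ i : Fin (repL K f).length, ⟪((repL K f)[i.1]).2, secf K x h ((repL K f)[i.1]).1⟫_𝕜
      = ∑ i : Fin (repL K f).length, ⟪K x ((repL K f)[i.1]).1 ((repL K f)[i.1]).2, h⟫_𝕜 := by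
        refine Finset.sum_congr rfl fun i _ => ?_
        exact herm_inner K hH _ _ _ _
    _ = ⟪∑ i : Fin (repL K f).length, K x ((repL K f)[i.1]).1 ((repL K f)[i.1]).2, h⟫_𝕜 :=
        by rw [sum_inner]
    _ = ⟪piL K (repL K f) x, h⟫_𝕜 := by rw [piL_apply]
    _ = ⟪valC K f x, h⟫_𝕜 := by rw [piL_repL]

def preCore (hK : IsPSDK K) : PreInnerProductSpace.Core 𝕜 (Car K) where
  inner := innerC K
  conj_inner_symm := innerC_conj K hK.1
  re_inner_nonneg := innerC_self_nonneg K hK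
  add_left := innerC_add_left K hK.1
  smul_left := innerC_smul_left K hK.1

def coreC (hK : IsPSDK K) : InnerProductSpace.Core 𝕜 (Car K) :=
  { preCore K hK with
    definite := by
      letI c : PreInnerProductSpace.Core 𝕜 (Car K) := preCore K hK
      intro f hf
      have hf' : innerC K f f = 0 := hf
      have hcs : ∀ g : Car K, ‖innerC K f g‖ * ‖innerC K g f‖ ≤
          re (innerC K f f) * re (innerC K g g) := fun g =>
        InnerProductSpace.Core.inner_mul_inner_self_le (𝕜 := 𝕜) (F := Car K) f g
      have key : ∀ x : X, valC K f x = 0 := by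
        intro x
        set g := KxC K x (valC K f x) with hg
        have h5 := hcs g
        have h6 : ‖innerC K g f‖ = ‖innerC K f g‖ := by
          rw [← innerC_conj K hK.1 f g, RCLike.norm_conj]
        rw [h6, hf', map_zero, zero_mul] at h5
        have h7 : innerC K f g = 0 := by
          have := norm_nonneg (innerC K f g)
          have h8 : ‖innerC K f g‖ = 0 := by nlinarith
          exact norm_eq_zero.mp h8
        rw [hg, innerC_Kx K hK.1] at h7
        exact inner_self_eq_zero.mp h7
      apply valC_inj K
      rw [map_zero]
      funext x
      exact key x }

lemma sqrtAux {A a b c : ℝ} (hA : 0 ≤ A) (ha : 0 ≤ a) (hb : 0 ≤ b) (hc : 0 ≤ c)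
    (h1 : a ^ 2 ≤ c * b) (h2 : b ^ 2 ≤ A * a ^ 2) : a ≤ Real.sqrt A * c := by
  have hs : 0 ≤ Real.sqrt A := Real.sqrt_nonneg A
  have hb' : b ≤ Real.sqrt A * a := by
    have h3 := Real.sqrt_le_sqrt h2
    rwa [Real.sqrt_sq hb, Real.sqrt_mul hA, Real.sqrt_sq ha] at h3
  rcases eq_or_lt_of_le ha with h | h
  · rw [← h]; positivity
  · nlinarith [mul_le_mul_of_nonneg_left hb' hc]

def build (hK : IsPSDK K) : RKHSBundle.{u, v, w, max v w} 𝕜 H K := by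
  letI cd : InnerProductSpace.Core 𝕜 (Car K) := coreC K hK
  letI : NormedAddCommGroup (Car K) :=
    @InnerProductSpace.Core.toNormedAddCommGroup 𝕜 (Car K) _ _ _ cd
  letI : InnerProductSpace 𝕜 (Car K) := InnerProductSpace.ofCore cd.toCore
  have inner_def : ∀ f g : Car K, ⟪f, g⟫_𝕜 = innerC K f g := fun f g => rfl
  have reproC : ∀ (f : Car K) (x : X) (h : H x), ⟪f, KxC K x h⟫_𝕜 = ⟪valC K f x, h⟫_𝕜 :=
    fun f x h => innerC_Kx K hK.1 f x h
  have normKx : ∀ (x : X) (h : H x), ‖KxC K x h‖ ^ 2 ≤ ‖K x x‖ * ‖h‖ ^ 2 := by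
    intro x h
    have h1 : (‖KxC K x h‖ : ℝ) ^ 2 = re (⟪K x x h, h⟫_𝕜) := by
      rw [← inner_self_eq_norm_sq (𝕜 := 𝕜), reproC]
      rfl
    calc (‖KxC K x h‖ : ℝ) ^ 2 = re (⟪K x x h, h⟫_𝕜) := h1
      _ ≤ ‖(⟪K x x h, h⟫_𝕜 : 𝕜)‖ := RCLike.re_le_norm _
      _ ≤ ‖K x x h‖ * ‖h‖ := norm_inner_le_norm _ _
      _ ≤ (‖K x x‖ * ‖h‖) * ‖h‖ :=
          mul_le_mul_of_nonneg_right ((K x x).le_opNorm h) (norm_nonneg _)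
      _ = ‖K x x‖ * ‖h‖ ^ 2 := by ring
  have evalBound : ∀ (x : X) (f : Car K), ‖valC K f x‖ ≤ Real.sqrt ‖K x x‖ * ‖f‖ := by
    intro x f
    refine sqrtAux (A := ‖K x x‖) (a := ‖valC K f x‖) (b := ‖KxC K x (valC K f x)‖)
      (c := ‖f‖) (norm_nonneg _) (norm_nonneg _) (norm_nonneg _) (norm_nonneg _) ?_ ?_
    · have h2 : (‖valC K f x‖ : ℝ) ^ 2 = re (⟪f, KxC K x (valC K f x)⟫_𝕜) := by
        rw [← inner_self_eq_norm_sq (𝕜 := 𝕜), reproC]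
      rw [h2]
      calc re (⟪f, KxC K x (valC K f x)⟫_𝕜) ≤ ‖(⟪f, KxC K x (valC K f x)⟫_𝕜 : 𝕜)‖ :=
            RCLike.re_le_norm _
        _ ≤ ‖f‖ * ‖KxC K x (valC K f x)‖ := norm_inner_le_norm _ _
    · exact normKx x _
  let evalCL : ∀ x : X, Car K →L[𝕜] H x := fun x =>
    LinearMap.mkContinuous ((LinearMap.proj x).comp (valC K)) (Real.sqrt ‖K x x‖)
      (fun f => evalBound x f)
  let ι : Car K →L[𝕜] Completion (Car K) := Completion.toComplL
  have hdense : DenseRange ⇑ι := by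
    rw [Completion.coe_toComplL]
    exact Completion.denseRange_coe
  have hind : IsUniformInducing ⇑ι := by
    rw [Completion.coe_toComplL]
    exact Completion.isUniformInducing_coe _
  let embL : ∀ x : X, Completion (Car K) →L[𝕜] H x := fun x =>
    (evalCL x).extend ι
  have embL_coe : ∀ (x : X) (f : Car K), embL x (ι f) = valC K f x :=
    fun x f => ContinuousLinearMap.extend_eq _ hdense hind _
  have repro' : ∀ (f : Completion (Car K)) (x : X) (h : H x),
      ⟪embL x f, h⟫_𝕜 = ⟪f, ι (KxC K x h)⟫_𝕜 := by
    intro f x h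
    refine Completion.denseRange_coe.induction_on f
      (isClosed_eq (Continuous.inner (embL x).continuous continuous_const)
        (Continuous.inner continuous_id' continuous_const)) ?_
    intro a
    have hca : ((a : Completion (Car K))) = ι a := rfl
    have hck : ((KxC K x h : Car K) : Completion (Car K)) = ι (KxC K x h) := rfl
    rw [hca, embL_coe, ← hca, ← hck, Completion.inner_coe, reproC]
  have emb0 : ∀ u : Completion (Car K), (∀ x, embL x u = 0) → u = 0 := by
    intro u hu
    have h1 : ∀ (x : X) (h : H x), ⟪u, ι (KxC K x h)⟫_𝕜 = 0 := by
      intro x h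
      rw [← repro', hu, inner_zero_left]
    have h2 : ∀ a : Car K, ⟪u, ι a⟫_𝕜 = 0 := by
      intro a
      obtain ⟨v, hv, rfl⟩ : ∃ v hv, mkC K v hv = a := ⟨valC K a, memC K a, rfl⟩
      refine Submodule.span_induction
        (p := fun v hv => ⟪u, ι (mkC K v hv)⟫_𝕜 = 0) ?_ ?_ ?_ ?_ hv
      · rintro v ⟨x, h, rfl⟩
        exact h1 x h
      · show (⟪u, ι (0 : Car K)⟫_𝕜) = 0
        rw [map_zero, inner_zero_right]
      · intro a b hva hvb ha hb
        show (⟪u, ι (mkC K a hva + mkC K b hvb)⟫_𝕜) = 0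
        rw [map_add, inner_add_right, ha, hb, add_zero]
      · intro c a hva ha
        show (⟪u, ι (c • mkC K a hva)⟫_𝕜) = 0
        rw [map_smul, inner_smul_right, ha, mul_zero]
    have h3 : ∀ y : Completion (Car K), ⟪u, y⟫_𝕜 = 0 := by
      intro y
      refine Completion.denseRange_coe.induction_on y
        (isClosed_eq (Continuous.inner continuous_const continuous_id') continuous_const) ?_
      intro a
      exact h2 a
    exact inner_self_eq_zero.mp (h3 u)
  refine
    { carrier := Completion (Car K)
      ng := inferInstance
      ip := inferInstance
      cs := inferInstance
      emb := LinearMap.pi fun x => (embL x : Completion (Car K) →ₗ[𝕜] H x)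
      emb_inj := ?_
      Kx := fun x h => ι (KxC K x h)
      emb_Kx := ?_
      repro := ?_ }
  · intro f g hfg
    have h4 : ∀ x, embL x (f - g) = 0 := by
      intro x
      have := congrFun hfg x
      simp only [LinearMap.pi_apply, ContinuousLinearMap.coe_coe] at this
      rw [map_sub, this, sub_self]
    have := emb0 (f - g) h4
    exact sub_eq_zero.mp this
  · intro x h y
    simp only [LinearMap.pi_apply, ContinuousLinearMap.coe_coe]
    rw [embL_coe]
    rfl
  · intro f x h
    simp only [LinearMap.pi_apply, ContinuousLinearMap.coe_coe]
    exact repro' f x h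

lemma rkhs_inner_Kx_Kx (R : RKHSBundle.{u, v, w, r} 𝕜 H K) (x y : X) (h : H x) (g : H y) :
    ⟪R.Kx x h, R.Kx y g⟫_𝕜 = (⟪K y x h, g⟫_𝕜 : 𝕜) := by
  rw [← R.repro, R.emb_Kx]

lemma psd_of_rkhs (R : RKHSBundle.{u, v, w, r} 𝕜 H K) : IsPSDK K := by
  constructor
  · intro x y
    symm
    rw [ContinuousLinearMap.eq_adjoint_iff]
    intro u v
    calc (⟪K y x u, v⟫_𝕜 : 𝕜) = ⟪R.emb (R.Kx x u) y, v⟫_𝕜 := by rw [R.emb_Kx]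
      _ = ⟪R.Kx x u, R.Kx y v⟫_𝕜 := R.repro _ y v
      _ = conj (⟪R.Kx y v, R.Kx x u⟫_𝕜) := (inner_conj_symm _ _).symm
      _ = conj (⟪R.emb (R.Kx y v) x, u⟫_𝕜) := by rw [R.repro]
      _ = conj (⟪K x y v, u⟫_𝕜) := by rw [R.emb_Kx]
      _ = ⟪u, K x y v⟫_𝕜 := inner_conj_symm _ _
  · intro n x h
    have hterm : ∀ i j, (⟪K (x j) (x i) (h i), h j⟫_𝕜 : 𝕜)
        = ⟪R.Kx (x i) (h i), R.Kx (x j) (h j)⟫_𝕜 :=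
      fun i j => (rkhs_inner_Kx_Kx K R _ _ _ _).symm
    have hsum : (∑ i, ∑ j, (⟪K (x j) (x i) (h i), h j⟫_𝕜 : 𝕜))
        = ⟪∑ i, R.Kx (x i) (h i), ∑ j, R.Kx (x j) (h j)⟫_𝕜 := by
      simp only [hterm, inner_sum, sum_inner]
      exact Finset.sum_comm
    rw [hsum]
    exact inner_self_nonneg

lemma rkhs_normKx_sq (R : RKHSBundle.{u, v, w, r} 𝕜 H K) (x : X) (h : H x) :
    ‖R.Kx x h‖ ^ 2 ≤ ‖K x x‖ * ‖h‖ ^ 2 := by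
  rw [← inner_self_eq_norm_sq (𝕜 := 𝕜), rkhs_inner_Kx_Kx]
  calc re (⟪K x x h, h⟫_𝕜) ≤ ‖(⟪K x x h, h⟫_𝕜 : 𝕜)‖ := RCLike.re_le_norm _
    _ ≤ ‖K x x h‖ * ‖h‖ := norm_inner_le_norm _ _
    _ ≤ (‖K x x‖ * ‖h‖) * ‖h‖ :=
        mul_le_mul_of_nonneg_right ((K x x).le_opNorm h) (norm_nonneg _)
    _ = ‖K x x‖ * ‖h‖ ^ 2 := by ring

lemma rkhs_emb_bound (R : RKHSBundle.{u, v, w, r} 𝕜 H K) (x : X) (f : R.carrier) :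
    ‖R.emb f x‖ ≤ Real.sqrt ‖K x x‖ * ‖f‖ := by
  refine sqrtAux (A := ‖K x x‖) (a := ‖R.emb f x‖) (b := ‖R.Kx x (R.emb f x)‖)
    (c := ‖f‖) (norm_nonneg _) (norm_nonneg _) (norm_nonneg _) (norm_nonneg _) ?_ ?_
  · have h2 : (‖R.emb f x‖ : ℝ) ^ 2 = re (⟪f, R.Kx x (R.emb f x)⟫_𝕜) := by
      rw [← inner_self_eq_norm_sq (𝕜 := 𝕜), R.repro]
    rw [h2]
    calc re (⟪f, R.Kx x (R.emb f x)⟫_𝕜) ≤ ‖(⟪f, R.Kx x (R.emb f x)⟫_𝕜 : 𝕜)‖ :=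
          RCLike.re_le_norm _
      _ ≤ ‖f‖ * ‖R.Kx x (R.emb f x)‖ := norm_inner_le_norm _ _
  · exact rkhs_normKx_sq K R x _

def evalR (R : RKHSBundle.{u, v, w, r} 𝕜 H K) (x : X) : R.carrier →L[𝕜] H x :=
  LinearMap.mkContinuous ((LinearMap.proj x).comp R.emb) (Real.sqrt ‖K x x‖)
    (fun f => rkhs_emb_bound K R x f)

lemma evalR_apply (R : RKHSBundle.{u, v, w, r} 𝕜 H K) (x : X) (f : R.carrier) :
    evalR K R x f = R.emb f x := rfl

def DD (R : RKHSBundle.{u, v, w, r} 𝕜 H K) : Submodule 𝕜 R.carrier :=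
  Submodule.span 𝕜 (⋃ x, Set.range (R.Kx x))

lemma memDD (R : RKHSBundle.{u, v, w, r} 𝕜 H K) (x : X) (h : H x) : R.Kx x h ∈ DD K R :=
  Submodule.subset_span (Set.mem_iUnion.2 ⟨x, Set.mem_range_self h⟩)

lemma DD_dense (R : RKHSBundle.{u, v, w, r} 𝕜 H K) : Dense (DD K R : Set R.carrier) := by
  have htop : (DD K R).topologicalClosure = ⊤ := by
    rw [Submodule.topologicalClosure_eq_top_iff, Submodule.eq_bot_iff]
    intro f hf
    have h1 : ∀ (x : X) (h : H x), (⟪R.emb f x, h⟫_𝕜 : 𝕜) = 0 := by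
      intro x h
      rw [R.repro]
      have h2 := (Submodule.mem_orthogonal _ f).mp hf _ (memDD K R x h)
      rw [← inner_conj_symm, h2, map_zero]
    have h2 : R.emb f = R.emb 0 := by
      rw [map_zero]
      funext x
      exact inner_self_eq_zero.mp (h1 x (R.emb f x))
    exact R.emb_inj h2
  rw [dense_iff_closure_eq, ← Submodule.topologicalClosure_coe, htop, Submodule.top_coe]

lemma exists_iso (R R' : RKHSBundle.{u, v, w, r} 𝕜 H K) :
    ∃ U : R.carrier →L[𝕜] R'.carrier, Function.Surjective ⇑U ∧
      (∀ f, R'.emb (U f) = R.emb f) ∧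
      (∀ f g, (⟪U f, U g⟫_𝕜 : 𝕜) = ⟪f, g⟫_𝕜) := by
  have hDsub : ∀ v : R.carrier, v ∈ DD K R → ∃ f', R.emb v = R'.emb f' := by
    intro v hv
    refine Submodule.span_induction (p := fun v _ => ∃ f', R.emb v = R'.emb f')
      ?_ ?_ ?_ ?_ hv
    · rintro u hu
      obtain ⟨x, hx⟩ := Set.mem_iUnion.mp hu
      obtain ⟨h, rfl⟩ := hx
      exact ⟨R'.Kx x h, by funext y; rw [R.emb_Kx, R'.emb_Kx]⟩
    · exact ⟨0, by rw [map_zero, map_zero]⟩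
    · rintro a b _ _ ⟨fa, ha⟩ ⟨fb, hb⟩
      exact ⟨fa + fb, by rw [map_add, map_add, ha, hb]⟩
    · rintro c a _ ⟨fa, ha⟩
      exact ⟨c • fa, by rw [map_smul, map_smul, ha]⟩
  set D := DD K R with hD
  let u0 : ∀ _ : D, R'.carrier := fun v => (hDsub v.1 v.2).choose
  have hu0 : ∀ v : D, R'.emb (u0 v) = R.emb v.1 := fun v => (hDsub v.1 v.2).choose_spec.symm
  let Ulin : D →ₗ[𝕜] R'.carrier :=
    { toFun := u0
      map_add' := fun a b => R'.emb_inj (by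
        rw [hu0, map_add, hu0, hu0, Submodule.coe_add, map_add])
      map_smul' := fun c a => R'.emb_inj (by
        rw [hu0, RingHom.id_apply, map_smul, hu0, Submodule.coe_smul, map_smul]) }
  have hUapp : ∀ v : D, Ulin v = u0 v := fun _ => rfl
  have hUKx : ∀ (x : X) (h : H x) (hm : R.Kx x h ∈ D), Ulin ⟨R.Kx x h, hm⟩ = R'.Kx x h := by
    intro x h hm
    apply R'.emb_inj
    rw [hUapp, hu0]
    funext y
    rw [R.emb_Kx, R'.emb_Kx]
  have hIP : ∀ (a : D) (v : R.carrier) (hv : v ∈ D),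
      (⟪Ulin a, Ulin ⟨v, hv⟩⟫_𝕜 : 𝕜) = ⟪(a : R.carrier), v⟫_𝕜 := by
    intro a v hv
    refine Submodule.span_induction
      (p := fun v hv => (⟪Ulin a, Ulin ⟨v, hv⟩⟫_𝕜 : 𝕜) = ⟪(a : R.carrier), v⟫_𝕜)
      ?_ ?_ ?_ ?_ hv
    · rintro u hu
      obtain ⟨x, hx⟩ := Set.mem_iUnion.mp hu
      obtain ⟨h, rfl⟩ := hx
      show (⟪Ulin a, Ulin ⟨R.Kx x h, memDD K R x h⟩⟫_𝕜 : 𝕜) = ⟪(a : R.carrier), R.Kx x h⟫_𝕜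
      rw [hUKx x h, ← R'.repro, hUapp, hu0, ← R.repro]
    · show (⟪Ulin a, Ulin (0 : D)⟫_𝕜 : 𝕜) = ⟪(a : R.carrier), (0 : R.carrier)⟫_𝕜
      rw [map_zero, inner_zero_right, inner_zero_right]
    · intro v₁ v₂ h₁ h₂ ih₁ ih₂
      show (⟪Ulin a, Ulin (⟨v₁, h₁⟩ + ⟨v₂, h₂⟩ : D)⟫_𝕜 : 𝕜) = ⟪(a : R.carrier), v₁ + v₂⟫_𝕜
      rw [map_add, inner_add_right, ih₁, ih₂, inner_add_right]
    · intro c v₁ h₁ ih₁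
      show (⟪Ulin a, Ulin (c • (⟨v₁, h₁⟩ : D))⟫_𝕜 : 𝕜) = ⟪(a : R.carrier), c • v₁⟫_𝕜
      rw [map_smul, inner_smul_right, ih₁, inner_smul_right]
  have hnormU : ∀ v : D, ‖Ulin v‖ = ‖(v : R.carrier)‖ := by
    intro v
    have h2 : (⟪Ulin v, Ulin v⟫_𝕜 : 𝕜) = ⟪(v : R.carrier), (v : R.carrier)⟫_𝕜 := hIP v v.1 v.2
    rw [@norm_eq_sqrt_re_inner 𝕜, @norm_eq_sqrt_re_inner 𝕜, h2]
  let Ucont : D →L[𝕜] R'.carrier := Ulin.mkContinuous 1 (fun v => by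
    rw [hnormU, one_mul]
    exact le_of_eq rfl)
  have hde : DenseRange (⇑(Submodule.subtypeL D)) := by
    show DenseRange (Subtype.val : D → R.carrier)
    rw [DenseRange, Subtype.range_coe]
    exact DD_dense K R
  have hie : IsUniformInducing (⇑(Submodule.subtypeL D)) := by
    show IsUniformInducing (Subtype.val : D → R.carrier)
    exact isUniformEmbedding_subtype_val.toIsUniformInducing
  let U : R.carrier →L[𝕜] R'.carrier := Ucont.extend (Submodule.subtypeL D)
  have hUe : ∀ v : D, U (v : R.carrier) = Ulin v := fun v =>
    ContinuousLinearMap.extend_eq Ucont hde hie v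
  have hembU : ∀ f, R'.emb (U f) = R.emb f := by
    have hx : ∀ x : X, (fun f : R.carrier => evalR K R' x (U f))
        = fun f : R.carrier => evalR K R x f := by
      intro x
      refine Continuous.ext_on (DD_dense K R)
        (((evalR K R' x).continuous).comp U.continuous) ((evalR K R x).continuous) ?_
      intro v hv
      show R'.emb (U v) x = R.emb v x
      rw [show U v = Ulin ⟨v, hv⟩ from hUe ⟨v, hv⟩, hUapp]
      exact congrFun (hu0 ⟨v, hv⟩) x
    intro f
    funext x
    exact congrFun (hx x) f
  have hinner : ∀ f g, (⟪U f, U g⟫_𝕜 : 𝕜) = ⟪f, g⟫_𝕜 := by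
    have step1 : ∀ (a : D) (g : R.carrier), (⟪U (a : R.carrier), U g⟫_𝕜 : 𝕜)
        = ⟪(a : R.carrier), g⟫_𝕜 := by
      intro a
      have h3 := Continuous.ext_on (DD_dense K R)
        (Continuous.inner (continuous_const (y := U (a : R.carrier))) U.continuous)
        (Continuous.inner (continuous_const (y := (a : R.carrier))) continuous_id')
        (fun v hv => by
          show (⟪U (a : R.carrier), U v⟫_𝕜 : 𝕜) = ⟪(a : R.carrier), v⟫_𝕜
          rw [hUe a, show U v = Ulin ⟨v, hv⟩ from hUe ⟨v, hv⟩]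
          exact hIP a v hv)
      exact fun g => congrFun h3 g
    intro f g
    have h3 := Continuous.ext_on (DD_dense K R)
      (Continuous.inner U.continuous (continuous_const (y := U g)))
      (Continuous.inner continuous_id' (continuous_const (y := g)))
      (fun v hv => step1 ⟨v, hv⟩ g)
    exact congrFun h3 f
  have hisoU : Isometry ⇑U := AddMonoidHomClass.isometry_of_norm U (fun f => by
    rw [@norm_eq_sqrt_re_inner 𝕜, @norm_eq_sqrt_re_inner 𝕜, hinner])
  have hclosed : IsClosed (Set.range ⇑U) := hisoU.isUniformInducing.isComplete_range.isClosed
  have hsurj : Function.Surjective ⇑U := by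
    intro f'
    have hle : DD K R' ≤ LinearMap.range (U : R.carrier →ₗ[𝕜] R'.carrier) := by
      refine Submodule.span_le.mpr ?_
      rintro u hu
      obtain ⟨x, hx⟩ := Set.mem_iUnion.mp hu
      obtain ⟨h, rfl⟩ := hx
      exact ⟨R.Kx x h, by
        show U (R.Kx x h) = R'.Kx x h
        rw [show U (R.Kx x h) = Ulin ⟨R.Kx x h, memDD K R x h⟩ from hUe ⟨R.Kx x h, memDD K R x h⟩, hUKx]⟩
    have hr : (DD K R' : Set R'.carrier) ⊆ Set.range ⇑U := fun a ha => hle ha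
    have h1 : f' ∈ closure (DD K R' : Set R'.carrier) := by
      rw [(DD_dense K R').closure_eq]
      trivial
    have h2 := closure_mono hr h1
    rwa [hclosed.closure_eq] at h2
  exact ⟨U, hsurj, hembU, hinner⟩

end RKHSAux


/-- (1) `K` is positive semidefinite iff there exists a
reproducing kernel Hilbert space with kernel `K`; (2) any two reproducing
kernel Hilbert spaces with kernel `K` coincide: they consist of the same
sections and carry the same inner product. -/
theorem rkhs_exists_iff_psd_and_unique (K : ∀ y x : X, H x →L[𝕜] H y) :
    (IsPSDK K ↔ Nonempty (RKHSBundle.{u, v, w, max v w} 𝕜 H K)) ∧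
    (∀ (R : RKHSBundle.{u, v, w, r} 𝕜 H K) (R' : RKHSBundle.{u, v, w, r} 𝕜 H K),
      Set.range R.emb = Set.range R'.emb ∧
      (∀ (f g : R.carrier) (f' g' : R'.carrier),
        R.emb f = R'.emb f' → R.emb g = R'.emb g' →
        (⟪f, g⟫_𝕜 : 𝕜) = ⟪f', g'⟫_𝕜)) := by
  constructor
  · constructor
    · intro hK
      exact ⟨RKHSAux.build K hK⟩
    · rintro ⟨R⟩
      exact RKHSAux.psd_of_rkhs K R
  · intro R R'
    obtain ⟨U, hsurj, hembU, hinner⟩ := RKHSAux.exists_iso K R R'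
    refine ⟨?_, ?_⟩
    · ext s
      constructor
      · rintro ⟨f, rfl⟩
        exact ⟨U f, hembU f⟩
      · rintro ⟨f', rfl⟩
        obtain ⟨f, rfl⟩ := hsurj f'
        exact ⟨f, (hembU f).symm⟩
    · intro f g f' g' hf hg
      have hf' : U f = f' := R'.emb_inj (by rw [hembU, hf])
      have hg' : U g = g' := R'.emb_inj (by rw [hembU, hg])
      rw [← hf', ← hg', hinner]
end
end

section
/- Let K be an H-operator-valued kernel on X which is partially positive semidefinite with respect to the partition {X_s}_{s∈S}. The following are equivalent: (1) K is of bounded shift type; (2) for every α ∈ Γ the shift operator Ψ(α), defined on finitely supported sections by Ψ(α)(δ_x h) = δ_{α·x} h, is bounded with respect to the seminorms induced by the semi-inner products ⟨f,g⟩_K := Σ_{x,y} ⟨K(y,x)f(x), g(y)⟩ on F⁰(X_{d(α)};H) and F⁰(X_{c(α)};H), i.e., there exists M_α ≥ 0 with ⟨Ψ(α)f, Ψ(α)f⟩_K ≤ M_α ⟨f,f⟩_K for all f ∈ F⁰(X_{d(α)};H). If, in addition, K is Γ-invariant, these are also equivalent to: (3) for every α ∈ Γ, the operator Φ(α) defined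 on D_{d(α)} := span{K^{d(α)}_x h : x ∈ X_{d(α)}, h ∈ H_x} by Φ(α)K^{d(α)}_x h = K^{c(α)}_{α·x} h is bounded with respect to the norms of the reproducing kernel Hilbert spaces ℛ_{K^{d(α)}} and ℛ_{K^{c(α)}}. -/
open scoped InnerProductSpace

noncomputable section

universe u uΓ uS v vO w

/-- A `*`-semigroupoid: partially defined multiplication (the product `mul α β`
is subject to the axioms only when `d α = c β`) together with an involution. -/
structure StarSgd (Γ : Type uΓ) (S : Type uS) where
  d : Γ → S
  c : Γ → S
  mul : Γ → Γ → Γ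
  star : Γ → Γ
  d_mul : ∀ {α β : Γ}, d α = c β → d (mul α β) = d β
  c_mul : ∀ {α β : Γ}, d α = c β → c (mul α β) = c α
  mul_assoc : ∀ {α β γ : Γ}, d α = c β → d β = c γ →
    mul α (mul β γ) = mul (mul α β) γ
  d_star : ∀ α, d (star α) = c α
  c_star : ∀ α, c (star α) = d α
  star_star : ∀ α, star (star α) = α
  star_mul : ∀ {α β : Γ}, d α = c β → star (mul α β) = mul (star β) (star α)

/-- A left action of a semigroupoid on a set `X`, with surjective anchor `a`;
`act α x` is subject to the axioms only when `d α = a x`. -/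
structure SgdAction (Γ : Type uΓ) (S : Type uS) (X : Type v) (G : StarSgd Γ S) where
  a : X → S
  a_surj : Function.Surjective a
  act : Γ → X → X
  a_act : ∀ {α : Γ} {x : X}, G.d α = a x → a (act α x) = G.c α
  act_mul : ∀ {α β : Γ} {x : X}, G.d β = a x → G.d α = G.c β →
    act (G.mul α β) x = act α (act β x)

variable {𝕜 : Type u} [RCLike 𝕜] {Γ : Type uΓ} {S : Type uS} {X : Type v}
  {O : Type vO} {E : O → Type w}
  [∀ o, NormedAddCommGroup (E o)] [∀ o, InnerProductSpace 𝕜 (E o)]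
  [∀ o, CompleteSpace (E o)]

/-- Transport along an equality of indices: since the Hilbert bundle over `X`
is given as a pullback `x ↦ E (p x)`, equal indices give literally the same
Hilbert space, and the transport is a linear isometry. -/
def castE (𝕜 : Type u) [RCLike 𝕜] {O : Type vO} (E : O → Type w)
    [∀ o, NormedAddCommGroup (E o)] [∀ o, InnerProductSpace 𝕜 (E o)]
    {o o' : O} (h : o = o') : E o ≃ₗᵢ[𝕜] E o' := by
  subst h; exact LinearIsometryEquiv.refl 𝕜 (E o)

variable {G : StarSgd Γ S} (A : SgdAction Γ S X G) (p : X → O)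

/-- `K` is partially Hermitian with respect to the partition of `X` into the
fibres of the anchor map. -/
def PartHermitian (K : ∀ y x : X, E (p x) →L[𝕜] E (p y)) : Prop :=
  ∀ x y : X, A.a x = A.a y → ContinuousLinearMap.adjoint (K x y) = K y x

/-- `K` is partially positive semidefinite with respect to the partition of
`X` into the fibres of the anchor map. -/
def PartPSD (K : ∀ y x : X, E (p x) →L[𝕜] E (p y)) : Prop :=
  PartHermitian A p K ∧
  ∀ (s : S) (n : ℕ) (x : Fin n → X), (∀ i, A.a (x i) = s) →
    ∀ h : ∀ i, E (p (x i)),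
      0 ≤ RCLike.re (∑ i, ∑ j, ⟪K (x j) (x i) (h i), h j⟫_𝕜)

variable (hp : ∀ {α : Γ} {x : X}, G.d α = A.a x → p (A.act α x) = p x)

/-- `K` is `Γ`-invariant: `K(α·x, y) = K(x, α*·y)`, expressed using the
transport isometries coming from the constancy of the bundle on orbits. -/
def GammaInvariant (K : ∀ y x : X, E (p x) →L[𝕜] E (p y)) : Prop :=
  ∀ (α : Γ) (x y : X) (hx : G.d α = A.a x) (hy : G.c α = A.a y) (k : E (p y)),
    castE 𝕜 E (hp hx) (K (A.act α x) y k) =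
      K x (A.act (G.star α) y)
        ((castE 𝕜 E (hp ((G.d_star α).trans hy))).symm k)

/-- `K` is of bounded shift type: for every `α` there is `M_α ≥ 0` dominating
the shifted quadratic forms by the original ones (stated via finite families of
points in the fibre `X_{d(α)}`). -/
def BoundedShiftType (K : ∀ y x : X, E (p x) →L[𝕜] E (p y)) : Prop :=
  ∀ α : Γ, ∃ M : ℝ, 0 ≤ M ∧
    ∀ (n : ℕ) (z : Fin n → X) (hz : ∀ i, G.d α = A.a (z i))
      (g : ∀ i, E (p (z i))),
      RCLike.re (∑ i, ∑ j, ⟪K (A.act α (z j)) (A.act α (z i))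
          ((castE 𝕜 E (hp (hz i))).symm (g i)),
          (castE 𝕜 E (hp (hz j))).symm (g j)⟫_𝕜) ≤
        M * RCLike.re (∑ i, ∑ j, ⟪K (z j) (z i) (g i), g j⟫_𝕜)

universe w'

variable [DecidableEq X]

/-- `F⁰(X_s; H)`: finitely supported sections over the fibre `X_s`. -/
def F0 (E : O → Type w) [∀ o, NormedAddCommGroup (E o)]
    {G : StarSgd Γ S} (A : SgdAction Γ S X G) (p : X → O) (s : S) : Type (max v w) :=
  DFinsupp (fun x : {x : X // A.a x = s} => E (p x.val))

instance (s : S) : AddCommGroup (F0 E A p s) := by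
  unfold F0; infer_instance

instance (s : S) : Module 𝕜 (F0 E A p s) := by
  unfold F0; infer_instance

open scoped Classical in
/-- The semi-inner product `⟨f, g⟩_K = ∑_{x,y} ⟨K(y,x) f(x), g(y)⟩` on the
finitely supported sections over the fibre `X_s`. -/
def kform (K : ∀ y x : X, E (p x) →L[𝕜] E (p y)) (s : S)
    (f g : F0 E A p s) : 𝕜 :=
  f.sum fun x fx => g.sum fun y gy => ⟪K y.val x.val fx, gy⟫_𝕜

/-- A reproducing kernel Hilbert space of sections over the fibre `X_s`. -/
structure RKHSOn (𝕜 : Type u) [RCLike 𝕜] {Γ : Type uΓ} {S : Type uS}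
    {X : Type v} {O : Type vO} (E : O → Type w)
    [∀ o, NormedAddCommGroup (E o)] [∀ o, InnerProductSpace 𝕜 (E o)]
    [∀ o, CompleteSpace (E o)]
    {G : StarSgd Γ S} (A : SgdAction Γ S X G) (p : X → O)
    (K : ∀ y x : X, E (p x) →L[𝕜] E (p y)) (s : S) :
    Type (max u v w (w' + 1)) where
  carrier : Type w'
  [ng : NormedAddCommGroup carrier]
  [ip : InnerProductSpace 𝕜 carrier]
  [cs : CompleteSpace carrier]
  emb : carrier →ₗ[𝕜] ∀ x : {x : X // A.a x = s}, E (p x.val)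
  emb_inj : Function.Injective emb
  Kx : ∀ x : {x : X // A.a x = s}, E (p x.val) → carrier
  emb_Kx : ∀ (x : {x : X // A.a x = s}) (h : E (p x.val))
    (y : {x : X // A.a x = s}), emb (Kx x h) y = K y.val x.val h
  repro : ∀ (f : carrier) (x : {x : X // A.a x = s}) (h : E (p x.val)),
    ⟪emb f x, h⟫_𝕜 = ⟪f, Kx x h⟫_𝕜

attribute [instance] RKHSOn.ng RKHSOn.ip RKHSOn.cs

/-- The subspaces `D_s := span{K^s_x h}` of the reproducing kernel Hilbert
spaces. -/
def Dspan (K : ∀ y x : X, E (p x) →L[𝕜] E (p y))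
    (R : ∀ s : S, RKHSOn.{u, uΓ, uS, v, vO, w, w'} 𝕜 E A p K s) (s : S) :
    Submodule 𝕜 (R s).carrier :=
  Submodule.span 𝕜 (⋃ x : {x : X // A.a x = s}, Set.range ((R s).Kx x))

/-!
For a finite family `(x_i, h_i)` in a fibre `X_s`, both `⟨f, f⟩_K` for `f = ∑ δ_{x_i} h_i` and
`‖∑ K^s_{x_i} h_i‖²` equal the Gram sum `∑_{i,j} ⟨K(x_j, x_i) h_i, h_j⟩`, and `Ψ(α)`, `Φ(α)` send
these vectors to the ones built from the shifted family `(α·x_i, h_i)`. Every element of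
`F⁰(X_s; H)` and of `D_s` is of this form, so each boundedness condition is the bounded shift type
inequality for all finite families; for `Φ(α)` the constant is `√M_α`.
-/

theorem exists_sq_bound_iff {ι : Type*} {u v : ι → ℝ} (hu : ∀ i, 0 ≤ u i) (hv : ∀ i, 0 ≤ v i) :
    (∃ M : ℝ, 0 ≤ M ∧ ∀ i, u i ^ 2 ≤ M * v i ^ 2) ↔ ∃ C : ℝ, 0 ≤ C ∧ ∀ i, u i ≤ C * v i := by
  constructor
  · rintro ⟨M, hM, hbound⟩
    refine ⟨√M, Real.sqrt_nonneg M, fun i => ?_⟩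
    have hCv : 0 ≤ √M * v i := mul_nonneg (Real.sqrt_nonneg M) (hv i)
    rw [← pow_le_pow_iff_left₀ (hu i) hCv two_ne_zero, mul_pow, Real.sq_sqrt hM]
    exact hbound i
  · rintro ⟨C, -, hbound⟩
    refine ⟨C ^ 2, sq_nonneg C, fun i => ?_⟩
    rw [← mul_pow]
    exact pow_le_pow_left₀ (hu i) (hbound i) 2

section KernelForms

omit [∀ o, CompleteSpace (E o)]

variable (K : ∀ y x : X, E (p x) →L[𝕜] E (p y))

def gramForm {n : ℕ} (z : Fin n → X) (g : ∀ i, E (p (z i))) : 𝕜 :=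
  ∑ i, ∑ j, ⟪K (z j) (z i) (g i), g j⟫_𝕜

def IsShiftBound (α : Γ) (M : ℝ) : Prop :=
  ∀ (n : ℕ) (z : Fin n → X) (hz : ∀ i, G.d α = A.a (z i)) (g : ∀ i, E (p (z i))),
    RCLike.re (gramForm p K (fun i => A.act α (z i)) fun i => (castE 𝕜 E (hp (hz i))).symm (g i))
      ≤ M * RCLike.re (gramForm p K z g)

omit [DecidableEq X] in
theorem boundedShiftType_iff :
    BoundedShiftType A p hp K ↔ ∀ α, ∃ M : ℝ, 0 ≤ M ∧ IsShiftBound A p hp K α M :=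
  Iff.rfl

def F0.single {s : S} (x : {x : X // A.a x = s}) (h : E (p x.val)) : F0 E A p s :=
  DFinsupp.single x h

theorem F0.exists_eq_sum_single {s : S} (f : F0 E A p s) :
    ∃ (n : ℕ) (z : Fin n → X) (hz : ∀ i, A.a (z i) = s) (g : ∀ i, E (p (z i))),
      f = ∑ i, F0.single A p ⟨z i, hz i⟩ (g i) := by
  classical
  let f' : Π₀ x : {x : X // A.a x = s}, E (p x.val) := f
  let e := f'.support.equivFin
  refine ⟨f'.support.card, fun i => (e.symm i).val.val, fun i => (e.symm i).val.prop,
    fun i => f' (e.symm i).val, ?_⟩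
  change f' = ∑ i, DFinsupp.single _ _
  calc f' = f'.sum fun x v => DFinsupp.single x v := DFinsupp.sum_single.symm
    _ = ∑ x : f'.support, DFinsupp.single x.val (f' x.val) := (Finset.sum_coe_sort _ _).symm
    _ = _ := (Fintype.sum_equiv e.symm _ _ fun _ => rfl).symm

theorem kform_sum_single {s : S} {n : ℕ} (z : Fin n → X) (hz : ∀ i, A.a (z i) = s)
    (g : ∀ i, E (p (z i))) :
    kform A p K s (∑ i, F0.single A p ⟨z i, hz i⟩ (g i))
      (∑ i, F0.single A p ⟨z i, hz i⟩ (g i)) = gramForm p K z g := by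
  classical
  unfold kform gramForm F0.single
  -- `erw`: the sums live in `F0`, whose additive structure is `DFinsupp`'s only up to unfolding.
  erw [← DFinsupp.sum_finsetSum_index
    (fun _ => by simp only [map_zero, inner_zero_left]; exact DFinsupp.sum_zero)
    fun _ _ _ => by simp only [map_add, inner_add_left]; exact DFinsupp.sum_add]
  refine Finset.sum_congr rfl fun i _ => ?_
  rw [DFinsupp.sum_single_index (by simp only [map_zero, inner_zero_left]; exact DFinsupp.sum_zero)]
  erw [← DFinsupp.sum_finsetSum_index (fun _ => by simp)
    fun _ _ _ => by simp only [inner_add_right]]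
  exact Finset.sum_congr rfl fun j _ => DFinsupp.sum_single_index (by simp)

theorem isShiftBound_iff_kform_le {α : Γ} {M : ℝ}
    (Ψ : F0 E A p (G.d α) →ₗ[𝕜] F0 E A p (G.c α))
    (hΨ : ∀ (x : X) (hx : G.d α = A.a x) (h : E (p x)),
      Ψ (F0.single A p ⟨x, hx.symm⟩ h) =
        F0.single A p ⟨A.act α x, A.a_act hx⟩ ((castE 𝕜 E (hp hx)).symm h)) :
    IsShiftBound A p hp K α M ↔ ∀ f : F0 E A p (G.d α),
      RCLike.re (kform A p K (G.c α) (Ψ f) (Ψ f)) ≤ M * RCLike.re (kform A p K (G.d α) f f) := by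
  have hshift : ∀ (n : ℕ) (z : Fin n → X) (hz : ∀ i, G.d α = A.a (z i)) (g : ∀ i, E (p (z i))),
      kform A p K (G.c α) (Ψ (∑ i, F0.single A p ⟨z i, (hz i).symm⟩ (g i)))
        (Ψ (∑ i, F0.single A p ⟨z i, (hz i).symm⟩ (g i))) =
      gramForm p K (fun i => A.act α (z i)) fun i => (castE 𝕜 E (hp (hz i))).symm (g i) := by
    intro n z hz g
    have hΨsum : Ψ (∑ i, F0.single A p ⟨z i, (hz i).symm⟩ (g i)) =
        ∑ i, F0.single A p ⟨A.act α (z i), A.a_act (hz i)⟩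
          ((castE 𝕜 E (hp (hz i))).symm (g i)) := by
      rw [map_sum]
      exact Finset.sum_congr rfl fun i _ => hΨ (z i) (hz i) (g i)
    rw [hΨsum]
    exact kform_sum_single A p K _ (fun i => A.a_act (hz i)) _
  constructor
  · intro hM f
    obtain ⟨n, z, hz, g, rfl⟩ := F0.exists_eq_sum_single A p f
    rw [hshift n z (fun i => (hz i).symm) g, kform_sum_single]
    exact hM n z (fun i => (hz i).symm) g
  · intro hM n z hz g
    have := hM (∑ i, F0.single A p ⟨z i, (hz i).symm⟩ (g i))
    rwa [hshift n z hz g, kform_sum_single] at this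

end KernelForms

namespace RKHSOn

omit [DecidableEq X]

variable {K : ∀ y x : X, E (p x) →L[𝕜] E (p y)} {s : S}
  (H : RKHSOn.{u, uΓ, uS, v, vO, w, w'} 𝕜 E A p K s)

theorem inner_Kx_Kx (x y : {x : X // A.a x = s}) (h : E (p x.val)) (k : E (p y.val)) :
    ⟪H.Kx x h, H.Kx y k⟫_𝕜 = ⟪K y.val x.val h, k⟫_𝕜 := by
  rw [← H.repro, H.emb_Kx]

theorem Kx_smul (x : {x : X // A.a x = s}) (c : 𝕜) (h : E (p x.val)) :
    H.Kx x (c • h) = c • H.Kx x h :=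
  H.emb_inj <| funext fun y => by
    rw [map_smul, Pi.smul_apply, H.emb_Kx, H.emb_Kx, ContinuousLinearMap.map_smul]

theorem norm_sq_sum_Kx {n : ℕ} (z : Fin n → X) (hz : ∀ i, A.a (z i) = s) (g : ∀ i, E (p (z i))) :
    ‖∑ i, H.Kx ⟨z i, hz i⟩ (g i)‖ ^ 2 = RCLike.re (gramForm p K z g) := by
  rw [← inner_self_eq_norm_sq (𝕜 := 𝕜), sum_inner, gramForm, map_sum]
  simp only [inner_sum, inner_Kx_Kx, map_sum]

end RKHSOn

section Dspan

omit [DecidableEq X]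

variable {K : ∀ y x : X, E (p x) →L[𝕜] E (p y)}
  (R : ∀ s : S, RKHSOn.{u, uΓ, uS, v, vO, w, w'} 𝕜 E A p K s)

def Dspan.Kx {s : S} (x : {x : X // A.a x = s}) (h : E (p x.val)) : Dspan A p K R s :=
  ⟨(R s).Kx x h, Submodule.subset_span (Set.mem_iUnion.mpr ⟨x, Set.mem_range_self h⟩)⟩

theorem Dspan.exists_eq_sum_Kx {s : S} (f : Dspan A p K R s) :
    ∃ (n : ℕ) (z : Fin n → X) (hz : ∀ i, A.a (z i) = s) (g : ∀ i, E (p (z i))),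
      f = ∑ i, Dspan.Kx A p R ⟨z i, hz i⟩ (g i) := by
  obtain ⟨n, c, v, hv⟩ := Submodule.mem_span_set'.mp f.2
  have hgen : ∀ i, ∃ (x : {x : X // A.a x = s}) (h : E (p x.val)), (R s).Kx x h = v i :=
    fun i => Set.mem_iUnion.mp (v i).2
  choose x h hxh using hgen
  refine ⟨n, fun i => (x i).val, fun i => (x i).prop, fun i => c i • h i, Subtype.ext ?_⟩
  rw [Submodule.coe_sum, ← hv]
  exact Finset.sum_congr rfl fun i _ => by rw [← hxh, ← RKHSOn.Kx_smul]; rfl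

theorem isShiftBound_iff_norm_sq_le {α : Γ} {M : ℝ}
    (Φ : Dspan A p K R (G.d α) →ₗ[𝕜] Dspan A p K R (G.c α))
    (hΦ : ∀ (x : X) (hx : G.d α = A.a x) (h : E (p x)),
      Φ (Dspan.Kx A p R ⟨x, hx.symm⟩ h) =
        Dspan.Kx A p R ⟨A.act α x, A.a_act hx⟩ ((castE 𝕜 E (hp hx)).symm h)) :
    IsShiftBound A p hp K α M ↔ ∀ f : Dspan A p K R (G.d α),
      ‖(Φ f : (R (G.c α)).carrier)‖ ^ 2 ≤ M * ‖(f : (R (G.d α)).carrier)‖ ^ 2 := by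
  have hnorm : ∀ {s : S} (n : ℕ) (z : Fin n → X) (hz : ∀ i, A.a (z i) = s)
      (g : ∀ i, E (p (z i))), ‖((∑ i, Dspan.Kx A p R ⟨z i, hz i⟩ (g i) : Dspan A p K R s) :
        (R s).carrier)‖ ^ 2 = RCLike.re (gramForm p K z g) := by
    intro s n z hz g
    rw [Submodule.coe_sum]
    exact (R s).norm_sq_sum_Kx A p z hz g
  have hshift : ∀ (n : ℕ) (z : Fin n → X) (hz : ∀ i, G.d α = A.a (z i)) (g : ∀ i, E (p (z i))),
      ‖(Φ (∑ i, Dspan.Kx A p R ⟨z i, (hz i).symm⟩ (g i)) : (R (G.c α)).carrier)‖ ^ 2 =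
        RCLike.re (gramForm p K (fun i => A.act α (z i))
          fun i => (castE 𝕜 E (hp (hz i))).symm (g i)) := by
    intro n z hz g
    rw [map_sum, Finset.sum_congr rfl fun i _ => hΦ (z i) (hz i) (g i)]
    exact hnorm n _ (fun i => A.a_act (hz i)) _
  constructor
  · intro hM f
    obtain ⟨n, z, hz, g, rfl⟩ := Dspan.exists_eq_sum_Kx A p R f
    rw [hshift n z (fun i => (hz i).symm) g, hnorm]
    exact hM n z (fun i => (hz i).symm) g
  · intro hM n z hz g
    have := hM (∑ i, Dspan.Kx A p R ⟨z i, (hz i).symm⟩ (g i))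
    rwa [hshift n z hz g, hnorm] at this

end Dspan

theorem bounded_shift_type_characterisation
    (K : ∀ y x : X, E (p x) →L[𝕜] E (p y))
    (Ψ : ∀ α : Γ, F0 E A p (G.d α) →ₗ[𝕜] F0 E A p (G.c α))
    (hΨ : ∀ (α : Γ) (x : X) (hx : G.d α = A.a x) (h : E (p x)),
      Ψ α (DFinsupp.single (⟨x, hx.symm⟩ : {x : X // A.a x = G.d α}) h) =
        DFinsupp.single (⟨A.act α x, A.a_act hx⟩ : {y : X // A.a y = G.c α})
          ((castE 𝕜 E (hp hx)).symm h)) :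
    (BoundedShiftType A p hp K ↔
      ∀ α : Γ, ∃ M : ℝ, 0 ≤ M ∧ ∀ f : F0 E A p (G.d α),
        RCLike.re (kform A p K (G.c α) (Ψ α f) (Ψ α f)) ≤
          M * RCLike.re (kform A p K (G.d α) f f)) ∧
    (GammaInvariant A p hp K →
      ∀ (R : ∀ s : S, RKHSOn.{u, uΓ, uS, v, vO, w, w'} 𝕜 E A p K s)
        (Φ : ∀ α : Γ,
          ↥(Dspan A p K R (G.d α)) →ₗ[𝕜] ↥(Dspan A p K R (G.c α))),
        (∀ (α : Γ) (x : X) (hx : G.d α = A.a x) (h : E (p x)),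
          Φ α ⟨(R (G.d α)).Kx ⟨x, hx.symm⟩ h,
              Submodule.subset_span
                (Set.mem_iUnion.mpr ⟨⟨x, hx.symm⟩, Set.mem_range_self h⟩)⟩ =
            ⟨(R (G.c α)).Kx ⟨A.act α x, A.a_act hx⟩
                ((castE 𝕜 E (hp hx)).symm h),
              Submodule.subset_span
                (Set.mem_iUnion.mpr ⟨⟨A.act α x, A.a_act hx⟩,
                  Set.mem_range_self _⟩)⟩) →
        (BoundedShiftType A p hp K ↔
          ∀ α : Γ, ∃ C : ℝ, 0 ≤ C ∧ ∀ f : ↥(Dspan A p K R (G.d α)),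
            ‖((Φ α f) : (R (G.c α)).carrier)‖ ≤
              C * ‖(f : (R (G.d α)).carrier)‖)) := by
  refine ⟨?_, fun _ R Φ hΦ => ?_⟩
  · rw [boundedShiftType_iff]
    exact forall_congr' fun α => exists_congr fun M => and_congr_right fun _ =>
      isShiftBound_iff_kform_le A p hp K (Ψ α) (hΨ α)
  · rw [boundedShiftType_iff]
    refine forall_congr' fun α => ?_
    rw [← exists_sq_bound_iff (fun _ => norm_nonneg _) fun _ => norm_nonneg _]
    exact exists_congr fun M => and_congr_right fun _ =>
      isShiftBound_iff_norm_sq_le A p hp R (Φ α) (hΦ α)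
end
end
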